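/- arXiv:1804.11008 — 2 statements merged into one kernel-verified Lean document; each statement's English description precedes it below -/
import Mathlib

section
/- Let k be a nonnegative integer and let G be a finite simple graph on n vertices. If G has a set X of vertices such that the cut-rank of X in G is at most k and both |X| > n/3 and n − |X| > n/3, then G has a pair of disjoint sets A, B of vertices with |A| > n/(3·2^k) and |B| > n/(3·2^k) such that A is complete to B or A is anticomplete to B. -/
/-! A matrix of rank `r` over GF(2) has at most `2 ^ r` distinct rows, since they lie in a
space with `2 ^ r` elements, so some row class of the cut matrix of `X` has at least
`|X| / 2 ^ k` members; as the transpose has the same rank, some column class has at least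
`|V ∖ X| / 2 ^ k` members. The matrix is constant on the product of a row class and a
column class, so these two classes are complete or anticomplete to each other. -/

open Classical in
/-- The cut-rank of a vertex set `X` in `G`: the rank over GF(2) of the `X × (V ∖ X)`
matrix whose `(x, y)` entry is `1` iff `x` and `y` are adjacent in `G`. -/
noncomputable def cutRank {V : Type} [Fintype V] [DecidableEq V]
    (G : SimpleGraph V) (X : Finset V) : ℕ :=
  Matrix.rank (Matrix.of fun (x : ↥X) (y : ↥(Xᶜ : Finset V)) =>
    if G.Adj ↑x ↑y then (1 : ZMod 2) else 0)

open Finset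

theorem Finset.exists_card_le_card_image_mul_card_fiber {α β : Type*} [DecidableEq β]
    {s : Finset α} (hs : s.Nonempty) (f : α → β) :
    ∃ b ∈ s.image f, #s ≤ #(s.image f) * #{a ∈ s | f a = b} := by
  obtain ⟨b, hb, hmax⟩ :=
    (s.image f).exists_max_image (fun b => #{a ∈ s | f a = b}) (hs.image f)
  refine ⟨b, hb, ?_⟩
  calc #s = ∑ c ∈ s.image f, #{a ∈ s | f a = c} := card_eq_sum_card_image f s
    _ ≤ #(s.image f) * #{a ∈ s | f a = b} := by
      simpa only [smul_eq_mul] using sum_le_card_nsmul _ _ _ hmax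

namespace Matrix

variable {m n K : Type*}

theorem apply_eq_of_row_eq_of_col_eq {α : Type*} {M : Matrix m n α} {i i₀ : m} {j j₀ : n}
    (hi : M.row i = M.row i₀) (hj : M.col j = M.col j₀) : M i j = M i₀ j₀ :=
  (congrFun hi j).trans (congrFun hj i₀)

variable [Fintype m] [Fintype n] [Field K] [Fintype K] [DecidableEq K]

theorem card_image_row_le_card_pow_rank (M : Matrix m n K) :
    #(univ.image M.row) ≤ Fintype.card K ^ M.rank := by
  rw [rank_eq_finrank_span_row, Fintype.card_eq_nat_card, ← Module.natCard_eq_pow_finrank,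
    ← Nat.card_eq_finsetCard, ← coe_sort_coe, coe_image, coe_univ, Set.image_univ]
  exact Nat.card_mono (Set.toFinite _) Submodule.subset_span

theorem exists_card_le_card_pow_rank_mul_card_row_eq [Nonempty m] (M : Matrix m n K) :
    ∃ i₀, Fintype.card m ≤ Fintype.card K ^ M.rank * #{i | M.row i = M.row i₀} := by
  obtain ⟨r, hr, hle⟩ := exists_card_le_card_image_mul_card_fiber univ_nonempty M.row
  obtain ⟨i₀, -, rfl⟩ := mem_image.1 hr
  exact ⟨i₀, hle.trans (Nat.mul_le_mul_right _ M.card_image_row_le_card_pow_rank)⟩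

end Matrix

namespace SimpleGraph

variable {V : Type} [Fintype V] [DecidableEq V]

open Classical in
noncomputable def cutMatrix (G : SimpleGraph V) (X : Finset V) :
    Matrix ↥X ↥(Xᶜ : Finset V) (ZMod 2) :=
  Matrix.of fun x y => if G.Adj ↑x ↑y then 1 else 0

theorem cutRank_eq_rank_cutMatrix (G : SimpleGraph V) (X : Finset V) :
    cutRank G X = (G.cutMatrix X).rank :=
  rfl

theorem cutMatrix_apply_eq_iff (G : SimpleGraph V) {X : Finset V} {x x' : ↥X}
    {y y' : ↥(Xᶜ : Finset V)} :
    G.cutMatrix X x y = G.cutMatrix X x' y' ↔ (G.Adj x y ↔ G.Adj x' y') := by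
  unfold cutMatrix
  by_cases h : G.Adj x y <;> by_cases h' : G.Adj x' y' <;> simp [h, h']

theorem exists_large_complete_or_anticomplete_pair (G : SimpleGraph V) {X : Finset V}
    (hX : X.Nonempty) (hXc : Xᶜ.Nonempty) :
    ∃ A ⊆ X, ∃ B ⊆ Xᶜ, #X ≤ 2 ^ cutRank G X * #A ∧ #Xᶜ ≤ 2 ^ cutRank G X * #B ∧
      ((∀ a ∈ A, ∀ b ∈ B, G.Adj a b) ∨ (∀ a ∈ A, ∀ b ∈ B, ¬ G.Adj a b)) := by
  have := hX.coe_sort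
  have := hXc.coe_sort
  set M := G.cutMatrix X
  obtain ⟨x₀, hA⟩ := M.exists_card_le_card_pow_rank_mul_card_row_eq
  obtain ⟨y₀, hB⟩ := M.transpose.exists_card_le_card_pow_rank_mul_card_row_eq
  rw [Fintype.card_coe, ZMod.card] at hA hB
  rw [Matrix.rank_transpose] at hB
  set A := ({x | M.row x = M.row x₀} : Finset ↥X).map (.subtype _)
  set B := ({y | M.transpose.row y = M.transpose.row y₀} : Finset ↥(Xᶜ : Finset V)).map
    (.subtype _)
  have hAB : ∀ a ∈ A, ∀ b ∈ B, (G.Adj a b ↔ G.Adj x₀ y₀) := by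
    intro _ ha' _ hb'
    obtain ⟨a, ha, rfl⟩ := mem_map.1 ha'
    obtain ⟨b, hb, rfl⟩ := mem_map.1 hb'
    exact G.cutMatrix_apply_eq_iff.1 <|
      Matrix.apply_eq_of_row_eq_of_col_eq (mem_filter.1 ha).2 (mem_filter.1 hb).2
  refine ⟨A, fun _ => property_of_mem_map_subtype _, B, fun _ => property_of_mem_map_subtype _,
    ?_, ?_, ?_⟩
  · rwa [card_map]
  · rwa [card_map]
  · exact (em (G.Adj x₀ y₀)).imp (fun h a ha b hb => (hAB a ha b hb).2 h)
      (fun h a ha b hb => mt (hAB a ha b hb).1 h)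

end SimpleGraph

theorem div_three_mul_two_pow_lt {x : ℝ} {s a r k : ℕ} (hs : x / 3 < s) (ha : s ≤ 2 ^ r * a)
    (hr : r ≤ k) : x / (3 * 2 ^ k) < a := by
  have hpow : (2 : ℝ) ^ r ≤ 2 ^ k := pow_le_pow_right₀ one_le_two hr
  have ha' : (s : ℝ) ≤ 2 ^ r * a := by exact_mod_cast ha
  rw [div_lt_iff₀ (by norm_num)] at hs
  rw [div_lt_iff₀ (by positivity)]
  nlinarith [mul_le_mul_of_nonneg_right hpow a.cast_nonneg]

/-- If `G` has a vertex set `X` of cut-rank at most `k` with `|X| > n/3` and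
`n - |X| > n/3`, then `G` has disjoint sets `A`, `B` with `|A|, |B| > n/(3·2^k)` such
that `A` is complete or anticomplete to `B`. -/
theorem strong_EH_of_low_cutRank {V : Type} [Fintype V] [DecidableEq V]
    (k : ℕ) (G : SimpleGraph V) (X : Finset V)
    (hcut : cutRank G X ≤ k)
    (h1 : (Fintype.card V : ℝ) / 3 < X.card)
    (h2 : (Fintype.card V : ℝ) / 3 < (Fintype.card V : ℝ) - X.card) :
    ∃ A B : Finset V, Disjoint A B ∧
      (Fintype.card V : ℝ) / (3 * 2 ^ k) < A.card ∧
      (Fintype.card V : ℝ) / (3 * 2 ^ k) < B.card ∧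
      ((∀ a ∈ A, ∀ b ∈ B, G.Adj a b) ∨ (∀ a ∈ A, ∀ b ∈ B, ¬ G.Adj a b)) := by
  have hXc : ((Xᶜ).card : ℝ) = Fintype.card V - X.card := by
    rw [card_compl, Nat.cast_sub X.card_le_univ]
  rw [← hXc] at h2
  have hpos : (0 : ℝ) ≤ Fintype.card V / 3 := by positivity
  obtain ⟨A, hAX, B, hBX, hA, hB, hAB⟩ := G.exists_large_complete_or_anticomplete_pair
    (card_pos.1 (by exact_mod_cast hpos.trans_lt h1))
    (card_pos.1 (by exact_mod_cast hpos.trans_lt h2))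
  exact ⟨A, B, disjoint_of_subset_left hAX (disjoint_of_subset_right hBX disjoint_compl_right),
    div_three_mul_two_pow_lt h1 hA hcut, div_three_mul_two_pow_lt h2 hB hcut, hAB⟩
end

section
/- Let 𝒢 be a class of finite simple graphs closed under taking induced subgraphs. If there exists ε > 0 such that every graph G in 𝒢 on at least 2 vertices has a pair of disjoint sets A, B of vertices with |A| ≥ ε|V(G)| and |B| ≥ ε|V(G)| such that A is complete to B or A is anticomplete to B, then there exists c > 0 such that every graph G in 𝒢 satisfies max(α(G), ω(G)) ≥ |V(G)|^c, where α(G) is the maximum size of an independent set of G and ω(G) is the maximum size of a clique of G. (That is, the strong Erdős–Hajnal property implies the Erdős–Hajnal property.) -/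
/-- The clique number `ω(G)`: the maximum size of a set of pairwise adjacent vertices. -/
noncomputable def cliqueNum {V : Type} [Fintype V] (G : SimpleGraph V) : ℕ :=
  sSup {n | ∃ s : Finset V, s.card = n ∧ ∀ x ∈ s, ∀ y ∈ s, x ≠ y → G.Adj x y}

/-- The independence number `α(G)`: the maximum size of a set of pairwise non-adjacent
vertices. -/
noncomputable def indepNum {V : Type} [Fintype V] (G : SimpleGraph V) : ℕ :=
  sSup {n | ∃ s : Finset V, s.card = n ∧ ∀ x ∈ s, ∀ y ∈ s, x ≠ y → ¬ G.Adj x y}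

/-!
Choose `c > 0` with `2 ε ^ c ≥ 1` and show `|V(G)| ^ c ≤ α(G) ω(G)` by induction on `|V(G)|`.
If the pair `A, B` given by the hypothesis is complete, a largest clique of `G[A]` together
with one of `G[B]` is a clique of `G`, so `ω(G[A]) + ω(G[B]) ≤ ω(G)`; as also
`α(G[A]), α(G[B]) ≤ α(G)`, this gives `α(G[A]) ω(G[A]) + α(G[B]) ω(G[B]) ≤ α(G) ω(G)`.
The anticomplete case is the complement of this.
By induction the left side is at least `|A| ^ c + |B| ^ c ≥ 2 (ε n) ^ c ≥ n ^ c`.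
Finally `max(α, ω) ≥ √(α ω) ≥ n ^ (c / 2)`.
-/

open Finset

lemma cliqueNum_eq_simpleGraph_cliqueNum {V : Type} [Fintype V] (G : SimpleGraph V) :
    cliqueNum G = G.cliqueNum := by
  simp only [cliqueNum, SimpleGraph.cliqueNum, SimpleGraph.isNClique_iff,
    SimpleGraph.isClique_iff, Set.Pairwise, mem_coe, and_comm]

lemma indepNum_eq_simpleGraph_indepNum {V : Type} [Fintype V] (G : SimpleGraph V) :
    indepNum G = G.indepNum := by
  simp only [indepNum, SimpleGraph.indepNum, SimpleGraph.isNIndepSet_iff,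
    SimpleGraph.isIndepSet_iff, Set.Pairwise, mem_coe, and_comm]

lemma rpow_le_two_mul_rpow {ε c x y : ℝ} (hε : 0 < ε) (hc : 0 ≤ c) (hεc : 1 ≤ 2 * ε ^ c)
    (hx : 0 ≤ x) (hxy : ε * x ≤ y) : x ^ c ≤ 2 * y ^ c :=
  calc x ^ c ≤ 2 * ε ^ c * x ^ c := le_mul_of_one_le_left (by positivity) hεc
    _ = 2 * (ε * x) ^ c := by rw [Real.mul_rpow hε.le hx, mul_assoc]
    _ ≤ 2 * y ^ c := by gcongr

lemma exists_pos_one_le_two_mul_rpow {ε : ℝ} (hε : 0 < ε) : ∃ c : ℝ, 0 < c ∧ 1 ≤ 2 * ε ^ c := by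
  set δ := min ε (1 / 2)
  have hδ : 0 < δ := lt_min hε one_half_pos
  have hδ₁ : δ < 1 := (min_le_right _ _).trans_lt one_half_lt_one
  have hc : 0 < Real.logb δ (1 / 2) :=
    Real.logb_pos_of_base_lt_one hδ hδ₁ one_half_pos one_half_lt_one
  refine ⟨Real.logb δ (1 / 2), hc, ?_⟩
  calc (1 : ℝ) = 2 * δ ^ Real.logb δ (1 / 2) := by
        rw [Real.rpow_logb hδ hδ₁.ne one_half_pos]; norm_num
    _ ≤ 2 * ε ^ Real.logb δ (1 / 2) := by gcongr; exact min_le_left _ _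

lemma rpow_div_two_le_max_of_rpow_le_mul {x a b c : ℝ} (hx : 0 ≤ x) (ha : 0 ≤ a) (hb : 0 ≤ b)
    (h : x ^ c ≤ a * b) : x ^ (c / 2) ≤ max a b := by
  have hab : a * b ≤ max a b ^ 2 := by
    rw [sq]; exact mul_le_mul (le_max_left a b) (le_max_right a b) hb (ha.trans (le_max_left a b))
  calc x ^ (c / 2) = √(x ^ c) := by
        rw [Real.sqrt_eq_rpow, ← Real.rpow_mul hx, div_eq_mul_one_div]
    _ ≤ √(max a b ^ 2) := Real.sqrt_le_sqrt (h.trans hab)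
    _ = max a b := Real.sqrt_sq (ha.trans (le_max_left a b))

namespace SimpleGraph
variable {V : Type*} (G : SimpleGraph V)

lemma compl_induce (s : Set V) : (G.induce s)ᶜ = Gᶜ.induce s := by
  ext a b
  simp [Subtype.ext_iff]

lemma cliqueNum_induce_add_le [Finite V] {A B : Set V} (hAB : Disjoint A B)
    (hcomplete : ∀ a ∈ A, ∀ b ∈ B, G.Adj a b) :
    (G.induce A).cliqueNum + (G.induce B).cliqueNum ≤ G.cliqueNum := by
  classical
  obtain ⟨s, hs⟩ := (G.induce A).exists_isNClique_cliqueNum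
  obtain ⟨t, ht⟩ := (G.induce B).exists_isNClique_cliqueNum
  rw [isNClique_induce_iff] at hs ht
  have hst : Disjoint (s.map (.subtype _)) (t.map (.subtype _)) := by
    rw [← disjoint_coe]
    exact hAB.mono (by simp) (by simp)
  have hclique : G.IsClique ↑(s.map (.subtype _) ∪ t.map (.subtype _)) := by
    rw [coe_union, IsClique, @Set.pairwise_union_of_symm _ _ _ _ G.symm]
    refine ⟨hs.isClique, ht.isClique, ?_⟩
    simp only [mem_coe, mem_map, Function.Embedding.coe_subtype]
    rintro _ ⟨a, -, rfl⟩ _ ⟨b, -, rfl⟩ -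
    exact hcomplete a a.2 b b.2
  calc (G.induce A).cliqueNum + (G.induce B).cliqueNum
      = #(s.map (.subtype _) ∪ t.map (.subtype _)) := by
        rw [card_union_of_disjoint hst, hs.card_eq, ht.card_eq]
    _ ≤ G.cliqueNum := IsClique.card_le_cliqueNum (tc := hclique)

lemma indepNum_induce_le [Finite V] (s : Set V) : (G.induce s).indepNum ≤ G.indepNum := by
  simpa [← cliqueNum_compl, compl_induce] using Gᶜ.cliqueNum_induce_le s

lemma indepNum_induce_add_le [Finite V] {A B : Set V} (hAB : Disjoint A B)
    (hanticomplete : ∀ a ∈ A, ∀ b ∈ B, ¬ G.Adj a b) :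
    (G.induce A).indepNum + (G.induce B).indepNum ≤ G.indepNum := by
  simpa [← cliqueNum_compl, compl_induce] using
    Gᶜ.cliqueNum_induce_add_le hAB fun a ha b hb =>
      (compl_adj G a b).2 ⟨hAB.ne_of_mem ha hb, hanticomplete a ha b hb⟩

lemma indepNum_mul_cliqueNum_induce_add_le [Finite V] {A B : Set V} (hAB : Disjoint A B)
    (hpair : (∀ a ∈ A, ∀ b ∈ B, G.Adj a b) ∨ (∀ a ∈ A, ∀ b ∈ B, ¬ G.Adj a b)) :
    (G.induce A).indepNum * (G.induce A).cliqueNum +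
      (G.induce B).indepNum * (G.induce B).cliqueNum ≤ G.indepNum * G.cliqueNum := by
  have hαA := G.indepNum_induce_le A
  have hαB := G.indepNum_induce_le B
  have hωA := G.cliqueNum_induce_le A
  have hωB := G.cliqueNum_induce_le B
  rcases hpair with hcomplete | hanticomplete
  · have hω := G.cliqueNum_induce_add_le hAB hcomplete
    calc _ ≤ G.indepNum * (G.induce A).cliqueNum + G.indepNum * (G.induce B).cliqueNum := by
          gcongr
      _ ≤ G.indepNum * G.cliqueNum := by rw [← mul_add]; gcongr
  · have hα := G.indepNum_induce_add_le hAB hanticomplete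
    calc _ ≤ (G.induce A).indepNum * G.cliqueNum + (G.induce B).indepNum * G.cliqueNum := by
          gcongr
      _ ≤ G.indepNum * G.cliqueNum := by rw [← add_mul]; gcongr

lemma one_le_cliqueNum [Finite V] [Nonempty V] : 1 ≤ G.cliqueNum := by
  inhabit V
  simpa using IsClique.card_le_cliqueNum (G := G) (t := {default}) (tc := by simp)

lemma one_le_indepNum [Finite V] [Nonempty V] : 1 ≤ G.indepNum := by
  simpa using Gᶜ.one_le_cliqueNum

end SimpleGraph

theorem rpow_card_le_indepNum_mul_cliqueNum
    (𝒢 : ∀ (V : Type) [Fintype V], SimpleGraph V → Prop)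
    (hclosed : ∀ (V : Type) [Fintype V] (G : SimpleGraph V), 𝒢 V G →
      ∀ s : Finset V, 𝒢 (↑s : Set V) (G.induce (↑s : Set V)))
    {ε c : ℝ} (hε : 0 < ε) (hc : 0 < c) (hεc : 1 ≤ 2 * ε ^ c)
    (hSEH : ∀ (V : Type) [Fintype V] (G : SimpleGraph V), 𝒢 V G →
      2 ≤ Fintype.card V →
      ∃ A B : Finset V, Disjoint A B ∧
        ε * Fintype.card V ≤ A.card ∧ ε * Fintype.card V ≤ B.card ∧
        ((∀ a ∈ A, ∀ b ∈ B, G.Adj a b) ∨ (∀ a ∈ A, ∀ b ∈ B, ¬ G.Adj a b)))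
    (V : Type) [Fintype V] (G : SimpleGraph V) (hG : 𝒢 V G) :
    (Fintype.card V : ℝ) ^ c ≤ G.indepNum * G.cliqueNum := by
  induction hn : Fintype.card V using Nat.strong_induction_on generalizing V with
  | _ n ih =>
  subst hn
  classical
  obtain hV | hV := isEmpty_or_nonempty V
  · rw [Fintype.card_eq_zero, Nat.cast_zero, Real.zero_rpow hc.ne']
    positivity
  obtain hn | hn := lt_or_ge (Fintype.card V) 2
  · calc (Fintype.card V : ℝ) ^ c ≤ 1 :=
          Real.rpow_le_one (Nat.cast_nonneg _) (by exact_mod_cast Nat.lt_succ_iff.1 hn) hc.le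
      _ ≤ G.indepNum * G.cliqueNum := one_le_mul_of_one_le_of_one_le
          (by exact_mod_cast G.one_le_indepNum) (by exact_mod_cast G.one_le_cliqueNum)
  obtain ⟨A, B, hAB, hA, hB, hpair⟩ := hSEH V G hG hn
  have hApos : 0 < #A := by exact_mod_cast (by positivity : 0 < ε * Fintype.card V).trans_le hA
  have hBpos : 0 < #B := by exact_mod_cast (by positivity : 0 < ε * Fintype.card V).trans_le hB
  have hcard : #A + #B ≤ Fintype.card V := by
    rw [← card_union_of_disjoint hAB]; exact card_le_univ _
  have ihA := ih #A (by omega) _ (G.induce A) (hclosed V G hG A) (Fintype.card_coe A)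
  have ihB := ih #B (by omega) _ (G.induce B) (hclosed V G hG B) (Fintype.card_coe B)
  calc (Fintype.card V : ℝ) ^ c ≤ (#A : ℝ) ^ c + (#B : ℝ) ^ c := by
        linarith [rpow_le_two_mul_rpow hε hc.le hεc (Nat.cast_nonneg _) hA,
          rpow_le_two_mul_rpow hε hc.le hεc (Nat.cast_nonneg _) hB]
    _ ≤ _ := add_le_add ihA ihB
    _ ≤ G.indepNum * G.cliqueNum := by
        exact_mod_cast G.indepNum_mul_cliqueNum_induce_add_le (disjoint_coe.2 hAB) hpair

/-- The strong Erdős–Hajnal property implies the Erdős–Hajnal property: if a class `𝒢` of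
finite graphs closed under taking induced subgraphs has some `ε > 0` such that every
`G ∈ 𝒢` on at least 2 vertices has a complete or anticomplete pair of disjoint linear-size
sets, then there is `c > 0` with `max(α(G), ω(G)) ≥ |V(G)|^c` for every `G ∈ 𝒢`. -/
theorem EH_of_strong_EH
    (𝒢 : ∀ (V : Type) [Fintype V], SimpleGraph V → Prop)
    (hclosed : ∀ (V : Type) [Fintype V] (G : SimpleGraph V), 𝒢 V G →
      ∀ (W : Type) [Fintype W] (H : SimpleGraph W),
        (∃ s : Finset V, Nonempty (H ≃g G.induce (↑s : Set V))) → 𝒢 W H)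
    (ε : ℝ) (hε : 0 < ε)
    (hSEH : ∀ (V : Type) [Fintype V] (G : SimpleGraph V), 𝒢 V G →
      2 ≤ Fintype.card V →
      ∃ A B : Finset V, Disjoint A B ∧
        ε * Fintype.card V ≤ A.card ∧ ε * Fintype.card V ≤ B.card ∧
        ((∀ a ∈ A, ∀ b ∈ B, G.Adj a b) ∨ (∀ a ∈ A, ∀ b ∈ B, ¬ G.Adj a b))) :
    ∃ c : ℝ, 0 < c ∧ ∀ (V : Type) [Fintype V] (G : SimpleGraph V), 𝒢 V G →
      (Fintype.card V : ℝ) ^ c ≤ ((max (indepNum G) (cliqueNum G) : ℕ) : ℝ) := by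
  obtain ⟨c, hc, hεc⟩ := exists_pos_one_le_two_mul_rpow hε
  refine ⟨c / 2, half_pos hc, fun V _ G hG => ?_⟩
  have h := rpow_card_le_indepNum_mul_cliqueNum 𝒢
    (fun V _ G hG s => hclosed V G hG _ _ ⟨s, ⟨.refl⟩⟩) hε hc hεc hSEH V G hG
  rw [indepNum_eq_simpleGraph_indepNum, cliqueNum_eq_simpleGraph_cliqueNum, Nat.cast_max]
  exact rpow_div_two_le_max_of_rpow_le_mul (Nat.cast_nonneg _) (Nat.cast_nonneg _)
    (Nat.cast_nonneg _) h
end
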